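/- Let e_y(y,t) = c·(K(y + at, t) − K(y − at, t)) where K is the heat kernel with diffusion coefficient b > 0, a ≠ 0, and c a constant. Then ‖e_y(·, s)‖_{L^1(ℝ)} → 0 as s → 0⁺. -/

import Mathlib

open Real MeasureTheory

/-- The one-dimensional heat kernel with diffusion coefficient `b`. -/
noncomputable def heatKernel (b y t : ℝ) : ℝ :=
  Real.exp (-(y ^ 2) / (4 * b * t)) / Real.sqrt (4 * Real.pi * b * t)

/-!
The substitution `y = √s u` turns the integral into
`|c| ∫ |K(u + a√s, 1) - K(u - a√s, 1)| du`, the `L¹` distance between two translates of one fixed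
Gaussian by `±a√s`. Translates by at most `1` are all dominated by the wider Gaussian
`e^{1/(4b)} e^{-u²/(8b)} / √(4πb)`, so dominated convergence sends this distance to `0`.
-/

open Filter Topology

lemma tendsto_integral_abs_comp_add_sub_comp_sub {f g : ℝ → ℝ} (hf : Continuous f)
    (hg : Integrable g) (hdom : ∀ᶠ h in 𝓝 0, ∀ u, |f (u + h)| ≤ g u) :
    Tendsto (fun h => ∫ u, |f (u + h) - f (u - h)|) (𝓝 0) (𝓝 0) := by
  have hdom' : ∀ᶠ h in 𝓝 (0 : ℝ), ∀ u, |f (u - h)| ≤ g u := by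
    have := (continuous_neg.tendsto' (0 : ℝ) 0 neg_zero).eventually hdom
    simpa [← sub_eq_add_neg] using this
  suffices Tendsto (fun h => ∫ u, |f (u + h) - f (u - h)|) (𝓝 0) (𝓝 (∫ _ : ℝ, (0 : ℝ))) by
    simpa
  refine tendsto_integral_filter_of_dominated_convergence (fun u => 2 * g u) ?_ ?_
    (hg.const_mul 2) ?_
  · exact .of_forall fun h =>
      (show Continuous fun u => |f (u + h) - f (u - h)| by fun_prop).aestronglyMeasurable
  · filter_upwards [hdom, hdom'] with h hp hm
    refine .of_forall fun u => ?_
    rw [Real.norm_eq_abs, abs_abs]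
    linarith [abs_sub (f (u + h)) (f (u - h)), hp u, hm u]
  · refine .of_forall fun u => ?_
    simpa using (show Continuous fun h => |f (u + h) - f (u - h)| by fun_prop).tendsto 0

lemma heatKernel_eq_div_sqrt {t : ℝ} (ht : 0 < t) (b y : ℝ) :
    heatKernel b y t = heatKernel b (y / √t) 1 / √t := by
  unfold heatKernel
  rw [div_pow, Real.sq_sqrt ht.le, mul_one, mul_one, Real.sqrt_mul' _ ht.le, div_div]
  congr 2
  field_simp

lemma integral_abs_heatKernel_sub {s : ℝ} (hs : 0 < s) (b a c : ℝ) :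
    ∫ y, |c * (heatKernel b (y + a * s) s - heatKernel b (y - a * s) s)|
      = |c| * ∫ u, |heatKernel b (u + a * √s) 1 - heatKernel b (u - a * √s) 1| := by
  have hst : 0 < √s := Real.sqrt_pos.2 hs
  have hquot (y : ℝ) :
      (y + a * s) / √s = y / √s + a * √s ∧ (y - a * s) / √s = y / √s - a * √s := by
    rw [add_div, sub_div, mul_div_assoc, Real.div_sqrt]
    exact ⟨rfl, rfl⟩
  simp_rw [heatKernel_eq_div_sqrt hs b, ← sub_div, (hquot _).1, (hquot _).2, abs_mul, abs_div,
    abs_of_pos hst]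
  rw [integral_const_mul, integral_div,
    Measure.integral_comp_div (fun u => |heatKernel b (u + a * √s) 1 - heatKernel b (u - a * √s) 1|),
    abs_of_pos hst, smul_eq_mul, mul_div_cancel_left₀ _ hst.ne']

lemma heatKernel_add_one_le {b : ℝ} (hb : 0 < b) (u : ℝ) {h : ℝ} (hh : |h| ≤ 1) :
    heatKernel b (u + h) 1 ≤ exp (1 / (4 * b)) / √(4 * π * b) * exp (-(1 / (8 * b)) * u ^ 2) := by
  have hsq : u ^ 2 ≤ 2 * (u + h) ^ 2 + 2 := by
    nlinarith [sq_nonneg (u + 2 * h), sq_abs h, abs_nonneg h]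
  unfold heatKernel
  rw [mul_one, mul_one, div_mul_eq_mul_div, ← exp_add]
  gcongr
  calc -(u + h) ^ 2 / (4 * b) ≤ (1 - u ^ 2 / 2) / (4 * b) := by gcongr; linarith
    _ = 1 / (4 * b) + -(1 / (8 * b)) * u ^ 2 := by field_simp; ring

theorem stmt4_general (b a c : ℝ) (hb : 0 < b) :
    Filter.Tendsto
      (fun s => ∫ y : ℝ, |c * (heatKernel b (y + a * s) s - heatKernel b (y - a * s) s)|)
      (nhdsWithin 0 (Set.Ioi 0)) (nhds 0) := by
  have hshift : Tendsto (fun h => ∫ u, |heatKernel b (u + h) 1 - heatKernel b (u - h) 1|)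
      (𝓝 0) (𝓝 0) := by
    have hg : Integrable fun u =>
        exp (1 / (4 * b)) / √(4 * π * b) * exp (-(1 / (8 * b)) * u ^ 2) :=
      (integrable_exp_neg_mul_sq (by positivity)).const_mul _
    refine tendsto_integral_abs_comp_add_sub_comp_sub (f := fun y => heatKernel b y 1)
      (by unfold heatKernel; fun_prop) hg ?_
    filter_upwards [Metric.closedBall_mem_nhds (0 : ℝ) one_pos] with h hh u
    rw [abs_of_nonneg (by unfold heatKernel; positivity)]
    exact heatKernel_add_one_le hb u (by simpa using hh)
  have hsqrt : Tendsto (fun s => a * √s) (𝓝[>] 0) (𝓝 0) :=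
    ((show Continuous fun s => a * √s by fun_prop).tendsto' 0 0 (by simp)).mono_left
      nhdsWithin_le_nhds
  have hlim := (hshift.comp hsqrt).const_mul |c|
  rw [mul_zero] at hlim
  exact hlim.congr' (eventually_nhdsWithin_of_forall fun s (hs : s ∈ Set.Ioi 0) =>
    (integral_abs_heatKernel_sub hs b a c).symm)

theorem stmt4 (b a c : ℝ) (hb : 0 < b) (ha : a ≠ 0) :
    Filter.Tendsto
      (fun s => ∫ y : ℝ, |c * (heatKernel b (y + a * s) s - heatKernel b (y - a * s) s)|)
      (nhdsWithin 0 (Set.Ioi 0)) (nhds 0) :=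
  stmt4_general b a c hb
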